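/- Let C be a finite candidate set, L a linear order on C, and c ∈ C a candidate such that at least two candidates are strictly below c in L and at least two candidates are strictly above c in L. Then no linear-order vote on C that is within one adjacent swap of some linear order single-peaked with respect to L ranks c last. -/

import Mathlib

variable {α : Type*} [DecidableEq α]

/-- `l` is a linear-order vote on the finite candidate set `s`:
a duplicate-free list containing exactly the elements of `s`;
earlier in the list means more preferred (for a societal axis `L`,
earlier in the list means smaller in the order `L`). -/
def IsVoteOn (s : Finset α) (l : List α) : Prop :=
  l.Nodup ∧ ∀ a, a ∈ l ↔ a ∈ s

/-- `a` is ranked strictly before `b` in the list `l`. -/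
def Prefers (l : List α) (a b : α) : Prop :=
  l.idxOf a < l.idxOf b

instance (l : List α) (a b : α) : Decidable (Prefers l a b) :=
  inferInstanceAs (Decidable ((_ : ℕ) < _))

/-- `v` is single-peaked with respect to the societal axis `L`. -/
def SinglePeaked (L v : List α) : Prop :=
  ∀ c1 c2 c3, c1 ∈ L → c2 ∈ L → c3 ∈ L →
    ((Prefers L c1 c2 ∧ Prefers L c2 c3) ∨ (Prefers L c3 c2 ∧ Prefers L c2 c1)) →
    Prefers v c1 c2 → Prefers v c2 c3

/-- `v` is single-caved with respect to the societal axis `L`. -/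
def SingleCaved (L v : List α) : Prop :=
  ∀ c1 c2 c3, c1 ∈ L → c2 ∈ L → c3 ∈ L →
    ((Prefers L c1 c2 ∧ Prefers L c2 c3) ∨ (Prefers L c3 c2 ∧ Prefers L c2 c1)) →
    Prefers v c2 c1 → Prefers v c3 c2

/-- The restriction of a ranking/order `l` to the subset `C` of candidates. -/
def restrictList (C : Finset α) (l : List α) : List α :=
  l.filter (fun a => decide (a ∈ C))

/-- The plurality score of candidate `c` in the election with candidate set `C`
and votes `V` (each vote a linear order on a set containing `C`): the number of
votes whose most preferred candidate among `C` is `c`. -/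
def pluralityScore (C : Finset α) (V : List (List α)) (c : α) : ℕ :=
  V.countP (fun v => decide ((restrictList C v).head? = some c))

/-- `p` is a plurality winner of the election `(C, V)`. -/
def PluralityWinner (C : Finset α) (V : List (List α)) (p : α) : Prop :=
  p ∈ C ∧ ∀ c ∈ C, pluralityScore C V c ≤ pluralityScore C V p

/-- `l'` is obtained from `l` by one swap of adjacent elements. -/
def AdjSwap (l l' : List α) : Prop :=
  ∃ (u w : List α) (x y : α), l = u ++ x :: y :: w ∧ l' = u ++ y :: x :: w

/-- `WithinSwaps k l l'` : `l` can be transformed into `l'` by a sequence of at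
most `k` adjacent swaps. -/
def WithinSwaps : ℕ → List α → List α → Prop
  | 0, l, l' => l = l'
  | (k+1), l, l' => l = l' ∨ ∃ l'', AdjSwap l l'' ∧ WithinSwaps k l'' l'

/-- `v` is swoon-SP w.r.t. axis `L` on candidate set `C`: the restriction of `v` to
`C` minus `v`'s most preferred candidate is single-peaked with respect to the
restriction of `L` to that set. -/
def SwoonSP (C : Finset α) (L v : List α) : Prop :=
  ∀ t, v.head? = some t →
    SinglePeaked (restrictList (C.erase t) L) (restrictList (C.erase t) v)

/-- The `k`-radius neighborhood of `c` with respect to `C'` and the axis `L`: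
if `C'`, listed in `L`-increasing order, is `d_1, ..., d_r` and `c = d_i`, this
is `{d_j : |i - j| ≤ k}`. -/
def nbhd (k : ℕ) (L : List α) (C' : Finset α) (c : α) : Finset α :=
  ((restrictList C' L).drop ((restrictList C' L).idxOf c - k)).take
    ((restrictList C' L).idxOf c + k + 1 - ((restrictList C' L).idxOf c - k))
    |>.toFinset

/-- The plurality election `(C, V)` is `k`-local with respect to axis `L`. -/
def KLocal (k : ℕ) (L : List α) (C : Finset α) (V : List (List α)) : Prop :=
  ∀ C' ⊆ C, ∀ c ∈ C', pluralityScore (nbhd k L C' c) V c = pluralityScore C' V c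

/-- In a `(a1, a2, 0)` scoring election over three candidates, the number of points
candidate `c` receives from (unit-weight) vote `v`. -/
def score3 (a1 a2 : ℕ) (v : List α) (c : α) : ℕ :=
  if v.idxOf c = 0 then a1 else if v.idxOf c = 1 then a2 else 0

/-- Indicator that the vote `v` does not veto (rank last) candidate `c`. -/
def vetoInd (v : List α) (c : α) : ℕ :=
  if v.getLast? = some c then 0 else 1

/-- The approval score of `c` given approval ballots `W`. -/
def approvalScore {I : Type*} [Fintype I] (W : I → Finset α) (c : α) : ℕ :=
  (Finset.univ.filter fun i => c ∈ W i).card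

/-- `p` is an approval winner of the election with candidate set `C` and ballots `W`. -/
def ApprovalWinner (C : Finset α) {I : Type*} [Fintype I] (W : I → Finset α) (p : α) : Prop :=
  p ∈ C ∧ ∀ c ∈ C, approvalScore W c ≤ approvalScore W p

/-! An adjacent swap moves the last candidate of `v` by at most one place, so `c` is among the
last two candidates of the single-peaked order `v'`. At most one candidate follows `c` in `v'`,
so of the two candidates on each side of `c` on the axis one precedes `c` in `v'`; but a
single-peaked vote cannot rank a candidate below a candidate on each side of it. -/

theorem Prefers.mem_left {l : List α} {a b : α} (h : Prefers l a b) : a ∈ l :=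
  List.idxOf_lt_length_iff.mp (h.trans_le List.idxOf_le_length)

theorem prefers_append_cons_of_mem {u w : List α} {e c : α} (hnd : (u ++ c :: w).Nodup)
    (he : e ∈ u) : Prefers (u ++ c :: w) e c := by
  have hcu : c ∉ u := fun hc => List.disjoint_of_nodup_append hnd hc List.mem_cons_self
  unfold Prefers
  rw [List.idxOf_append_of_mem he, List.idxOf_append_of_notMem hcu, List.idxOf_cons_self]
  exact (List.idxOf_lt_length_iff.mpr he).trans_le (Nat.le_add_right _ _)

theorem SinglePeaked.not_prefers_both {L v : List α} {a c d : α} (hsp : SinglePeaked L v)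
    (hdL : d ∈ L) (hac : Prefers L a c) (hcd : Prefers L c d) (ha : Prefers v a c) :
    ¬ Prefers v d c :=
  (hsp a c d hac.mem_left hcd.mem_left hdL (Or.inl ⟨hac, hcd⟩) ha).asymm

theorem exists_eq_append_cons_of_withinSwaps_one {β : Type*} {v v' : List β} {c : β}
    (hw : WithinSwaps 1 v v') (hlast : v.getLast? = some c) :
    ∃ u w, v' = u ++ c :: w ∧ w.length ≤ 1 := by
  obtain ⟨u, rfl⟩ := List.getLast?_eq_some_iff.mp hlast
  rcases hw with rfl | ⟨_, ⟨u', w, x, y, hv, rfl⟩, rfl⟩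
  · exact ⟨u, [], rfl, by simp⟩
  · rcases w.eq_nil_or_concat with rfl | ⟨w', z, rfl⟩
    · obtain ⟨-, hc⟩ := List.append_inj' (hv.trans (List.append_cons u' x [y])) rfl
      obtain rfl : c = y := by simpa using hc
      exact ⟨u', [x], rfl, by simp⟩
    · obtain ⟨-, hc⟩ :=
        List.append_inj' (hv.trans (by simp : _ = (u' ++ x :: y :: w') ++ [z])) rfl
      obtain rfl : c = z := by simpa using hc
      exact ⟨u' ++ y :: x :: w', [], by simp, by simp⟩

theorem exists_mem_left_of_length_le_one {β : Type*} {P : β → Prop} {u w : List β} {a b c : β}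
    (hw : w.length ≤ 1) (ha : a ∈ u ++ c :: w) (hb : b ∈ u ++ c :: w) (hab : a ≠ b)
    (hPa : P a) (hPb : P b) (hPc : ¬ P c) : ∃ e ∈ u, P e := by
  have hac : a ≠ c := fun h => hPc (h ▸ hPa)
  have hbc : b ≠ c := fun h => hPc (h ▸ hPb)
  match w, hw with
  | [], _ => exact ⟨a, by simpa [hac] using ha, hPa⟩
  | [x], _ =>
    by_cases hax : a = x
    · exact ⟨b, by simpa [hbc, hax ▸ hab.symm] using hb, hPb⟩
    · exact ⟨a, by simpa [hac, hax] using ha, hPa⟩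

theorem dodgson1SP_interior_never_vetoed_general
    (C : Finset α) (L : List α) (hL : IsVoteOn C L) (c : α)
    (hbelow : ∃ a ∈ C, ∃ b ∈ C, a ≠ b ∧ Prefers L a c ∧ Prefers L b c)
    (habove : ∃ a ∈ C, ∃ b ∈ C, a ≠ b ∧ Prefers L c a ∧ Prefers L c b)
    (v : List α)
    (hd : ∃ v', IsVoteOn C v' ∧ SinglePeaked L v' ∧ WithinSwaps 1 v v') :
    v.getLast? ≠ some c := by
  intro hlast
  obtain ⟨v', ⟨hnd, hmem⟩, hsp, hswap⟩ := hd
  obtain ⟨u, w, rfl, hw⟩ := exists_eq_append_cons_of_withinSwaps_one hswap hlast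
  obtain ⟨a, haC, b, hbC, hab, hac, hbc⟩ := hbelow
  obtain ⟨d, hdC, e, heC, hde, hcd, hce⟩ := habove
  obtain ⟨a', ha'u, ha'c⟩ := exists_mem_left_of_length_le_one (P := (Prefers L · c)) hw
    ((hmem a).mpr haC) ((hmem b).mpr hbC) hab hac hbc (lt_irrefl _)
  obtain ⟨d', hd'u, hcd'⟩ := exists_mem_left_of_length_le_one (P := (Prefers L c ·)) hw
    ((hmem d).mpr hdC) ((hmem e).mpr heC) hde hcd hce (lt_irrefl _)
  have hd'L : d' ∈ L := (hL.2 d').mpr ((hmem d').mp (List.mem_append_left _ hd'u))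
  exact hsp.not_prefers_both hd'L ha'c hcd' (prefers_append_cons_of_mem hnd ha'u)
    (prefers_append_cons_of_mem hnd hd'u)

/-- If at least two candidates lie strictly below `c` in the axis `L` and
at least two lie strictly above, then no vote that is within one adjacent swap of some
order single-peaked w.r.t. `L` ranks `c` last. -/
theorem dodgson1SP_interior_never_vetoed
    (C : Finset α) (L : List α) (hL : IsVoteOn C L) (c : α) (hc : c ∈ C)
    (hbelow : ∃ a ∈ C, ∃ b ∈ C, a ≠ b ∧ Prefers L a c ∧ Prefers L b c)
    (habove : ∃ a ∈ C, ∃ b ∈ C, a ≠ b ∧ Prefers L c a ∧ Prefers L c b)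
    (v : List α) (hv : IsVoteOn C v)
    (hd : ∃ v', IsVoteOn C v' ∧ SinglePeaked L v' ∧ WithinSwaps 1 v v') :
    v.getLast? ≠ some c :=
  dodgson1SP_interior_never_vetoed_general C L hL c hbelow habove v hd
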